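/- In the linear Bertrand duopoly, the grim-trigger patience threshold δ̄(p^c) = (π(p*,p^c) - π(p^c,p^c))/(π(p*,p^c) - π(p*,p*)) admits the closed form δ̄(p^c) = 1 - [a + (b-d)c - (b-d)(p^c + p*)] / ((p* - c) d). -/

import Mathlib

/-!
Both differences in the threshold are differences of the quadratic profit
`π(x, y) = (x - c)(a - b x + d y)`: the denominator is `π(p*, p^c) - π(p*, p*) = (p* - c) d (p^c - p*)`,
and the numerator is the denominator minus `π(p^c, p^c) - π(p*, p*)`. On the diagonal
`π(p, p) = (p - c)(a - (b - d) p)` is a quadratic in `p`, so that difference factors as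
`(p^c - p*) (a + (b - d) c - (b - d)(p^c + p*))`, and the common factor `p^c - p*` cancels.
-/

namespace LinearBertrand

variable (a b c d : ℝ)

def profit (x y : ℝ) : ℝ := (x - c) * (a - b * x + d * y)

theorem profit_sub_profit_diag (x y : ℝ) :
    profit a b c d x y - profit a b c d x x = (x - c) * d * (y - x) := by
  unfold profit; ring

theorem profit_diag_sub_profit_diag (x y : ℝ) :
    profit a b c d y y - profit a b c d x x =
      (y - x) * (a + (b - d) * c - (b - d) * (y + x)) := by
  unfold profit; ring

theorem patience_threshold_eq {x y : ℝ} (hxc : x ≠ c) (hd : d ≠ 0) (hxy : y ≠ x) :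
    (profit a b c d x y - profit a b c d y y) / (profit a b c d x y - profit a b c d x x) =
      1 - (a + (b - d) * c - (b - d) * (y + x)) / ((x - c) * d) := by
  have hxc' : x - c ≠ 0 := sub_ne_zero.mpr hxc
  have hyx : y - x ≠ 0 := sub_ne_zero.mpr hxy
  have hnum : profit a b c d x y - profit a b c d y y =
      (profit a b c d x y - profit a b c d x x) -
        (profit a b c d y y - profit a b c d x x) := by ring
  rw [hnum, profit_sub_profit_diag, profit_diag_sub_profit_diag]
  field_simp

theorem cost_lt_nashPrice (ha : a > c * (b - d)) (hbd : b > d) (hd : d > 0) :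
    c < (a + b * c) / (2 * b - d) := by
  rw [lt_div_iff₀ (by linarith)]
  linarith

end LinearBertrand

open LinearBertrand in
theorem threshold_closed_form_general (a b c d pc : ℝ)
    (ha : a > c * (b - d)) (hbd : b > d) (hd : d > 0)
    (hpc1 : (a + b * c) / (2 * b - d) < pc) :
    ((((a + b * c) / (2 * b - d)) - c) * (a - b * ((a + b * c) / (2 * b - d)) + d * pc) -
        (pc - c) * (a - b * pc + d * pc)) /
      ((((a + b * c) / (2 * b - d)) - c) * (a - b * ((a + b * c) / (2 * b - d)) + d * pc) -
        (((a + b * c) / (2 * b - d)) - c) *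
          (a - b * ((a + b * c) / (2 * b - d)) + d * ((a + b * c) / (2 * b - d)))) =
      1 - (a + (b - d) * c - (b - d) * (pc + (a + b * c) / (2 * b - d))) /
        ((((a + b * c) / (2 * b - d)) - c) * d) :=
  patience_threshold_eq a b c d (cost_lt_nashPrice a b c d ha hbd hd).ne' hd.ne' hpc1.ne'

/-- Closed form of the grim-trigger patience threshold in the linear Bertrand duopoly:
`δ̄(p^c) = 1 - [a + (b-d)c - (b-d)(p^c + p*)] / ((p* - c) d)`. -/
theorem threshold_closed_form (a b c d pc : ℝ)
    (ha : a > c * (b - d)) (hc : c < a / b) (hbd : b > d) (hd : d > 0) (hc0 : c > 0)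
    (hpc1 : (a + b * c) / (2 * b - d) < pc)
    (hpc2 : pc ≤ (a + (b - d) * c) / (2 * (b - d))) :
    ((((a + b * c) / (2 * b - d)) - c) * (a - b * ((a + b * c) / (2 * b - d)) + d * pc) -
        (pc - c) * (a - b * pc + d * pc)) /
      ((((a + b * c) / (2 * b - d)) - c) * (a - b * ((a + b * c) / (2 * b - d)) + d * pc) -
        (((a + b * c) / (2 * b - d)) - c) *
          (a - b * ((a + b * c) / (2 * b - d)) + d * ((a + b * c) / (2 * b - d)))) =
      1 - (a + (b - d) * c - (b - d) * (pc + (a + b * c) / (2 * b - d))) /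
        ((((a + b * c) / (2 * b - d)) - c) * d) :=
  threshold_closed_form_general a b c d pc ha hbd hd hpc1
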